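/- arXiv:2412.13632 — 5 statements merged into one kernel-verified Lean document; each statement's English description precedes it below -/
import Mathlib

section
/- The lex-cel social ranking function satisfies Pareto-efficiency: if rank_⊒(Z ∪ {x}) ≤ rank_⊒(Z ∪ {y}) for all Z ⊆ S with x,y ∉ Z, and rank_⊒(Z ∪ {x}) < rank_⊒(Z ∪ {y}) for at least one such Z, then x ≻^lex-cel y. -/
/-- Strict part of a relation on sets of elements. -/
def strictPart {α : Type*} (r : Finset α → Finset α → Prop) (X Y : Finset α) : Prop :=
  r X Y ∧ ¬ r Y X

/-- There is a strict chain `X₁ ⊐ X₂ ⊐ ⋯ ⊐ Xₙ ⊐ X` of length `n` above `X`. -/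
def ChainAbove {α : Type*} (r : Finset α → Finset α → Prop) (X : Finset α) (n : ℕ) : Prop :=
  ∃ l : List (Finset α), l.length = n ∧ List.Chain' (strictPart r) (l ++ [X])

/-- The rank of a set: one plus the maximal length of a strict chain above it. -/
noncomputable def rank {α : Type*} (r : Finset α → Finset α → Prop) (X : Finset α) : ℕ :=
  sSup {n | ChainAbove r X n} + 1
/-- Number of subsets of rank `k` containing `x`. -/
noncomputable def cnt {α : Type*} (r : Finset α → Finset α → Prop) (x : α) (k : ℕ) : ℕ :=
  {X : Finset α | rank r X = k ∧ x ∈ X}.ncard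

/-- lex-cel strict preference. -/
def LexStrict {α : Type*} (r : Finset α → Finset α → Prop) (x y : α) : Prop :=
  ∃ k : ℕ, (∀ i < k, cnt r x i = cnt r y i) ∧ cnt r y k < cnt r x k

/-- lex-cel indifference. -/
def LexEquiv {α : Type*} (r : Finset α → Finset α → Prop) (x y : α) : Prop :=
  ∀ i : ℕ, cnt r x i = cnt r y i

/-- lex-cel weak preference. -/
def LexGe {α : Type*} (r : Finset α → Finset α → Prop) (x y : α) : Prop :=
  LexStrict r x y ∨ LexEquiv r x y

/-- Auxiliary combinatorial lemma: if `f ≤ g` pointwise on a set `T` with a strict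
inequality at some point, then at the first level where the fibre counts differ,
`f`'s fibre is bigger. -/
lemma aux_lex {β : Type*} [Fintype β] (T : Set β) (f g : β → ℕ)
    (hfg : ∀ Z ∈ T, f Z ≤ g Z) (Z₀ : β) (hZ₀ : Z₀ ∈ T) (h0 : f Z₀ < g Z₀) :
    ∃ k, (∀ i < k, {Z | Z ∈ T ∧ f Z = i}.ncard = {Z | Z ∈ T ∧ g Z = i}.ncard) ∧
      {Z | Z ∈ T ∧ g Z = k}.ncard < {Z | Z ∈ T ∧ f Z = k}.ncard := by
  classical
  have hFsum : ∀ (h : β → ℕ) (k : ℕ), {Z | Z ∈ T ∧ h Z ≤ k}.ncard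
      = ∑ i ∈ Finset.range (k+1), {Z | Z ∈ T ∧ h Z = i}.ncard := by
    intro h k
    induction k with
    | zero => simp [Nat.le_zero]
    | succ k ih =>
      have hset : {Z | Z ∈ T ∧ h Z ≤ k+1} =
          {Z | Z ∈ T ∧ h Z ≤ k} ∪ {Z | Z ∈ T ∧ h Z = k+1} := by
        ext Z
        simp only [Set.mem_setOf_eq, Set.mem_union]
        constructor
        · rintro ⟨hT, hk⟩
          rcases Nat.lt_or_ge (h Z) (k+1) with h' | h'
          · exact Or.inl ⟨hT, Nat.lt_succ_iff.mp h'⟩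
          · exact Or.inr ⟨hT, le_antisymm hk h'⟩
        · rintro (⟨hT, hk⟩ | ⟨hT, hk⟩)
          · exact ⟨hT, hk.trans (Nat.le_succ k)⟩
          · exact ⟨hT, hk.le⟩
      have hdisj : Disjoint {Z | Z ∈ T ∧ h Z ≤ k} {Z | Z ∈ T ∧ h Z = k+1} := by
        rw [Set.disjoint_left]
        rintro Z ⟨_, hk⟩ ⟨_, hk'⟩
        omega
      rw [hset, Set.ncard_union_eq hdisj (Set.toFinite _) (Set.toFinite _), ih]
      exact (Finset.sum_range_succ _ (k+1)).symm
  have hGF : ∀ k, {Z | Z ∈ T ∧ g Z ≤ k}.ncard ≤ {Z | Z ∈ T ∧ f Z ≤ k}.ncard := by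
    intro k
    apply Set.ncard_le_ncard _ (Set.toFinite _)
    rintro Z ⟨hT, hk⟩
    exact ⟨hT, (hfg Z hT).trans hk⟩
  have hstrict : {Z | Z ∈ T ∧ g Z ≤ f Z₀}.ncard < {Z | Z ∈ T ∧ f Z ≤ f Z₀}.ncard := by
    apply Set.ncard_lt_ncard _ (Set.toFinite _)
    constructor
    · rintro Z ⟨hT, hk⟩
      exact ⟨hT, (hfg Z hT).trans hk⟩
    · intro hsub
      have h2 := (hsub ⟨hZ₀, le_rfl⟩).2
      omega
  have hex : ∃ k, {Z | Z ∈ T ∧ g Z = k}.ncard ≠ {Z | Z ∈ T ∧ f Z = k}.ncard := by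
    by_contra h
    push_neg at h
    have heq : {Z | Z ∈ T ∧ g Z ≤ f Z₀}.ncard = {Z | Z ∈ T ∧ f Z ≤ f Z₀}.ncard := by
      rw [hFsum g, hFsum f]
      exact Finset.sum_congr rfl fun i _ => h i
    omega
  have hkspec := Nat.find_spec hex
  have hkmin : ∀ i < Nat.find hex, {Z | Z ∈ T ∧ g Z = i}.ncard = {Z | Z ∈ T ∧ f Z = i}.ncard := by
    intro i hi
    by_contra h
    exact (Nat.find_min hex hi) h
  refine ⟨Nat.find hex, fun i hi => (hkmin i hi).symm, ?_⟩
  have h1 := hGF (Nat.find hex)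
  rw [hFsum g (Nat.find hex), hFsum f (Nat.find hex), Finset.sum_range_succ,
    Finset.sum_range_succ] at h1
  have h2 : ∑ i ∈ Finset.range (Nat.find hex), {Z | Z ∈ T ∧ g Z = i}.ncard
      = ∑ i ∈ Finset.range (Nat.find hex), {Z | Z ∈ T ∧ f Z = i}.ncard :=
    Finset.sum_congr rfl fun i hi => hkmin i (Finset.mem_range.mp hi)
  omega

/-- Splitting of `cnt` according to whether the second element `v` belongs to the set. -/
lemma cnt_split {α : Type*} [Fintype α] [DecidableEq α]
    (r : Finset α → Finset α → Prop) (u v : α) (huv : u ≠ v) (i : ℕ) :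
    cnt r u i = {X : Finset α | rank r X = i ∧ u ∈ X ∧ v ∈ X}.ncard
      + {Z : Finset α | (u ∉ Z ∧ v ∉ Z) ∧ rank r (insert u Z) = i}.ncard := by
  classical
  have hsplit : {X : Finset α | rank r X = i ∧ u ∈ X} =
      {X | rank r X = i ∧ u ∈ X ∧ v ∈ X} ∪ {X | rank r X = i ∧ u ∈ X ∧ v ∉ X} := by
    ext X
    simp only [Set.mem_setOf_eq, Set.mem_union]
    tauto
  have hdisj : Disjoint {X : Finset α | rank r X = i ∧ u ∈ X ∧ v ∈ X}
      {X : Finset α | rank r X = i ∧ u ∈ X ∧ v ∉ X} := by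
    rw [Set.disjoint_left]
    rintro X ⟨_, _, h⟩ ⟨_, _, h'⟩
    exact h' h
  have himg : (fun Z => insert u Z) '' {Z : Finset α | (u ∉ Z ∧ v ∉ Z) ∧ rank r (insert u Z) = i}
      = {X : Finset α | rank r X = i ∧ u ∈ X ∧ v ∉ X} := by
    ext X
    simp only [Set.mem_image, Set.mem_setOf_eq]
    constructor
    · rintro ⟨Z, ⟨⟨hu, hv⟩, hr⟩, rfl⟩
      refine ⟨hr, Finset.mem_insert_self _ _, ?_⟩
      simp only [Finset.mem_insert]
      rintro (h | h)
      · exact huv h.symm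
      · exact hv h
    · rintro ⟨hr, huX, hvX⟩
      refine ⟨X.erase u, ⟨⟨Finset.notMem_erase _ _,
        fun h => hvX (Finset.mem_of_mem_erase h)⟩, ?_⟩, Finset.insert_erase huX⟩
      rw [Finset.insert_erase huX]
      exact hr
  have hinj : Set.InjOn (fun Z => insert u Z)
      {Z : Finset α | (u ∉ Z ∧ v ∉ Z) ∧ rank r (insert u Z) = i} := by
    rintro Z ⟨⟨hZ, _⟩, _⟩ W ⟨⟨hW, _⟩, _⟩ h
    have h2 := congrArg (Finset.erase · u) h
    simpa [Finset.erase_insert hZ, Finset.erase_insert hW] using h2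
  unfold cnt
  rw [hsplit, Set.ncard_union_eq hdisj (Set.toFinite _) (Set.toFinite _), ← himg,
    Set.ncard_image_of_injOn hinj]

/-- lex-cel satisfies Pareto-efficiency. -/
theorem stmt3 {α : Type*} [Fintype α] [DecidableEq α]
    (r : Finset α → Finset α → Prop)
    (hrefl : Reflexive r) (htrans : Transitive r)
    (x y : α) (hxy : x ≠ y)
    (hle : ∀ Z : Finset α, x ∉ Z → y ∉ Z →
      rank r (insert x Z) ≤ rank r (insert y Z))
    (hlt : ∃ Z : Finset α, x ∉ Z ∧ y ∉ Z ∧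
      rank r (insert x Z) < rank r (insert y Z)) :
    LexStrict r x y := by
  classical
  obtain ⟨Z₀, hxZ₀, hyZ₀, hZ₀lt⟩ := hlt
  obtain ⟨k, hkeq, hklt⟩ := aux_lex {Z : Finset α | x ∉ Z ∧ y ∉ Z}
    (fun Z => rank r (insert x Z)) (fun Z => rank r (insert y Z))
    (fun Z hZ => hle Z hZ.1 hZ.2) Z₀ ⟨hxZ₀, hyZ₀⟩ hZ₀lt
  simp only [Set.mem_setOf_eq] at hkeq hklt
  have hA : ∀ i, {X : Finset α | rank r X = i ∧ y ∈ X ∧ x ∈ X}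
      = {X : Finset α | rank r X = i ∧ x ∈ X ∧ y ∈ X} := by
    intro i
    ext X
    simp only [Set.mem_setOf_eq]
    tauto
  have hT : ∀ i, {Z : Finset α | (y ∉ Z ∧ x ∉ Z) ∧ rank r (insert y Z) = i}
      = {Z : Finset α | (x ∉ Z ∧ y ∉ Z) ∧ rank r (insert y Z) = i} := by
    intro i
    ext Z
    simp only [Set.mem_setOf_eq]
    tauto
  refine ⟨k, ?_, ?_⟩
  · intro i hi
    rw [cnt_split r x y hxy i, cnt_split r y x hxy.symm i, hA, hT, hkeq i hi]
  · rw [cnt_split r x y hxy k, cnt_split r y x hxy.symm k, hA, hT]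
    exact Nat.add_lt_add_left hklt _
end

section
/- Let F be a finite argumentation framework, σ an extension semantics, and define the two-level extension ranking ⊒^σ by X ⊒^σ Y iff X ∈ σ(F) and Y ∉ σ(F). If ξ is a social ranking function satisfying Pareto-efficiency, x is credulously accepted (x ∈ X for some X ∈ σ(F)), y is rejected (y ∉ Y for all Y ∈ σ(F)), and σ(F) is nonempty, then x ≻^ξ_{⊒^σ} y. -/
/-- Strict part of a preorder on elements. -/
def sp {β : Type*} (p : β → β → Prop) (x y : β) : Prop := p x y ∧ ¬ p y x

/-- A social ranking function maps rankings over sets to rankings over elements. -/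
def SRF (α : Type*) := (Finset α → Finset α → Prop) → α → α → Prop

/-- Maximal rank of any set under `r`. -/
noncomputable def maxRank {α : Type*} (r : Finset α → Finset α → Prop) : ℕ :=
  sSup (Set.range (rank r))

/-- Pareto-efficiency of a social ranking function. -/
def ParetoEfficient {α : Type*} [DecidableEq α] (ξ : SRF α) : Prop :=
  ∀ r : Finset α → Finset α → Prop, ∀ x y : α,
    (∀ Z : Finset α, x ∉ Z → y ∉ Z → rank r (insert x Z) ≤ rank r (insert y Z)) →
    (∃ Z : Finset α, x ∉ Z ∧ y ∉ Z ∧ rank r (insert x Z) < rank r (insert y Z)) →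
    sp (ξ r) x y

/-- Independence from the worst set. -/
def IndepWorstSet {α : Type*} (ξ : SRF α) : Prop :=
  ∀ r r' : Finset α → Finset α → Prop,
    (∀ X : Finset α, rank r X < maxRank r → rank r' X = rank r X) →
    (∀ X : Finset α, rank r X = maxRank r → maxRank r ≤ rank r' X) →
    ∀ x y : α, sp (ξ r) x y → sp (ξ r') x y

/-- Dominating set axiom. -/
def DominatingSet {α : Type*} (ξ : SRF α) : Prop :=
  ∀ r : Finset α → Finset α → Prop, ∀ x y : α,
    (∃ X : Finset α, x ∈ X ∧ ∀ Y : Finset α, y ∈ Y → strictPart r X Y) →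
    sp (ξ r) x y

section Rank

variable {α : Type*} {r : Finset α → Finset α → Prop} {X : Finset α} {n : ℕ}

theorem chainAbove_zero (r : Finset α → Finset α → Prop) (X : Finset α) : ChainAbove r X 0 :=
  ⟨[], rfl, List.isChain_singleton X⟩

theorem ChainAbove.eq_zero (h : ChainAbove r X n) (hX : ∀ Y, ¬ strictPart r Y X) : n = 0 := by
  obtain ⟨l, rfl, hc⟩ := h
  rcases l.eq_nil_or_concat with rfl | ⟨L, b, rfl⟩
  · rfl
  · exact (hX b (List.isChain_iff_forall_rel_of_append_cons_cons.mp hc (l₁ := L) (l₂ := [])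
      (by simp))).elim

theorem ChainAbove.le_one (h : ChainAbove r X n)
    (hr : ∀ a b c, strictPart r a b → ¬ strictPart r b c) : n ≤ 1 := by
  obtain ⟨l, rfl, hc⟩ := h
  rcases l with _ | ⟨a, _ | ⟨b, rest⟩⟩
  · simp
  · simp
  · obtain ⟨c, t, hct⟩ := List.exists_cons_of_ne_nil (List.append_ne_nil_of_right_ne_nil rest
      (List.cons_ne_nil X []))
    have hab : strictPart r a b :=
      List.isChain_iff_forall_rel_of_append_cons_cons.mp hc (l₁ := []) (l₂ := c :: t)
        (by simp [hct])
    have hbc : strictPart r b c :=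
      List.isChain_iff_forall_rel_of_append_cons_cons.mp hc (l₁ := [a]) (l₂ := t)
        (by simp [hct])
    exact absurd hbc (hr a b c hab)

theorem rank_eq_one_of_forall_not_strictPart (hX : ∀ Y, ¬ strictPart r Y X) : rank r X = 1 := by
  have : {n | ChainAbove r X n} = {0} :=
    Set.eq_singleton_iff_unique_mem.mpr ⟨chainAbove_zero r X, fun _ h => h.eq_zero hX⟩
  rw [rank, this, csSup_singleton]

theorem sSup_chainAbove_le_one (hr : ∀ a b c, strictPart r a b → ¬ strictPart r b c) :
    sSup {n | ChainAbove r X n} ≤ 1 :=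
  csSup_le ⟨0, chainAbove_zero r X⟩ fun _ h => h.le_one hr

theorem rank_le_two (hr : ∀ a b c, strictPart r a b → ¬ strictPart r b c) : rank r X ≤ 2 := by
  have := sSup_chainAbove_le_one (X := X) hr
  rw [rank]
  omega

theorem rank_eq_two_of_strictPart {Y : Finset α} (hYX : strictPart r Y X)
    (hr : ∀ a b c, strictPart r a b → ¬ strictPart r b c) : rank r X = 2 := by
  have hchain : ChainAbove r X 1 := ⟨[Y], rfl, List.isChain_pair.mpr hYX⟩
  have : sSup {n | ChainAbove r X n} = 1 :=
    le_antisymm (sSup_chainAbove_le_one hr) (le_csSup ⟨1, fun _ h => h.le_one hr⟩ hchain)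
  rw [rank, this]

end Rank

section TwoLevel

variable {α : Type*} {S : Set (Finset α)} {X Y : Finset α}

theorem strictPart_twoLevel_iff :
    strictPart (fun X Y => X ∈ S ∧ Y ∉ S) X Y ↔ X ∈ S ∧ Y ∉ S :=
  ⟨And.left, fun h => ⟨h, fun h' => h.2 h'.1⟩⟩

theorem twoLevel_not_strictPart_strictPart (a b c : Finset α) :
    strictPart (fun X Y => X ∈ S ∧ Y ∉ S) a b → ¬ strictPart (fun X Y => X ∈ S ∧ Y ∉ S) b c :=
  fun hab hbc => hab.1.2 hbc.1.1

theorem rank_twoLevel_of_mem (hX : X ∈ S) : rank (fun X Y => X ∈ S ∧ Y ∉ S) X = 1 :=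
  rank_eq_one_of_forall_not_strictPart fun _ h => h.1.2 hX

theorem rank_twoLevel_of_notMem (hY : Y ∈ S) (hX : X ∉ S) :
    rank (fun X Y => X ∈ S ∧ Y ∉ S) X = 2 :=
  rank_eq_two_of_strictPart (strictPart_twoLevel_iff.mpr ⟨hY, hX⟩)
    twoLevel_not_strictPart_strictPart

theorem rank_twoLevel_le_two : rank (fun X Y => X ∈ S ∧ Y ∉ S) X ≤ 2 :=
  rank_le_two twoLevel_not_strictPart_strictPart

end TwoLevel

theorem stmt5_general {α : Type*} [DecidableEq α]
    (ext : Set (Finset α))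
    (ξ : SRF α) (hP : ParetoEfficient ξ) (x y : α)
    (hx : ∃ X ∈ ext, x ∈ X) (hy : ∀ Y ∈ ext, y ∉ Y) :
    sp (ξ (fun X Y => X ∈ ext ∧ Y ∉ ext)) x y := by
  obtain ⟨X, hX, hxX⟩ := hx
  have hyZ : ∀ Z : Finset α, insert y Z ∉ ext := fun Z h => hy _ h (Finset.mem_insert_self y Z)
  apply hP _ x y
  · intro Z _ _
    rw [rank_twoLevel_of_notMem hX (hyZ Z)]
    exact rank_twoLevel_le_two
  · refine ⟨X.erase x, Finset.notMem_erase x X, fun h => hy X hX (Finset.mem_of_mem_erase h), ?_⟩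
    rw [Finset.insert_erase hxX, rank_twoLevel_of_mem hX, rank_twoLevel_of_notMem hX (hyZ _)]
    omega

/-- under the two-level extension ranking, a Pareto-efficient social
ranking function ranks every credulously accepted argument strictly above every
rejected one. -/
theorem stmt5 {α : Type*} [Fintype α] [DecidableEq α]
    (ext : Set (Finset α)) (hne : ext.Nonempty)
    (ξ : SRF α) (hP : ParetoEfficient ξ) (x y : α)
    (hx : ∃ X ∈ ext, x ∈ X) (hy : ∀ Y ∈ ext, y ∉ Y) :
    sp (ξ (fun X Y => X ∈ ext ∧ Y ∉ ext)) x y :=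
  stmt5_general ext ξ hP x y hx hy
end

section
/- If an extension-ranking semantics τ respects conflicts and a social ranking function ξ satisfies Dominating set, then the induced argument ranking ξ_τ satisfies Self-Contradiction: for any AF F=(A,R) and arguments a,b with (a,a) ∉ R and (b,b) ∈ R, a is ranked strictly above b. -/
/-- A set of arguments is conflict-free. -/
def ConflictFree {α : Type*} (att : α → α → Prop) (E : Finset α) : Prop :=
  ∀ a ∈ E, ∀ b ∈ E, ¬ att a b

/-- `E` defends the argument `a`. -/
def Defends {α : Type*} (att : α → α → Prop) (E : Finset α) (a : α) : Prop :=
  ∀ b : α, att b a → ∃ c ∈ E, att c b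

/-- Admissible set: conflict-free and defends all its members. -/
def Admissible {α : Type*} (att : α → α → Prop) (E : Finset α) : Prop :=
  ConflictFree att E ∧ ∀ a ∈ E, Defends att E a

/-- Complete extension: admissible and contains everything it defends. -/
def Complete {α : Type*} (att : α → α → Prop) (E : Finset α) : Prop :=
  Admissible att E ∧ ∀ a : α, Defends att E a → a ∈ E

/-- if `τ` respects conflicts and `ξ` satisfies Dominating set then
the induced argument ranking satisfies Self-Contradiction. -/
theorem stmt8 {α : Type*} [Fintype α]
    (τ : (α → α → Prop) → Finset α → Finset α → Prop)
    (hτ : ∀ (att : α → α → Prop) (E E' : Finset α),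
      ConflictFree att E → ¬ ConflictFree att E' → strictPart (τ att) E E')
    (ξ : SRF α) (hξ : DominatingSet ξ)
    (att : α → α → Prop) (a b : α) (ha : ¬ att a a) (hb : att b b) :
    sp (ξ (τ att)) a b := by
  apply hξ
  refine ⟨{a}, Finset.mem_singleton_self a, fun Y hY => ?_⟩
  apply hτ
  · intro x hx y hy
    rw [Finset.mem_singleton] at hx hy
    subst hx; subst hy; exact ha
  · intro h
    exact h b hY b hY hb
end

section
/- For the conflict-free base extension ranking r-cf defined by E ⊒^cf_F E' iff CF_F(E) ⊆ CF_F(E'), any social ranking function ξ such that ξ_{r-cf} satisfies cf-Compatibility (every argument in some conflict-free set is ranked strictly above every argument in no conflict-free set) satisfies Dominating set on all r-cf-realisable preorders. -/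
/-- The internal conflicts of a set. -/
def CFset {α : Type*} (att : α → α → Prop) (E : Finset α) : Set (α × α) :=
  {p : α × α | p.1 ∈ E ∧ p.2 ∈ E ∧ att p.1 p.2}

/-- Conflict-free base extension ranking. -/
def rcf {α : Type*} (att : α → α → Prop) (E E' : Finset α) : Prop :=
  CFset att E ⊆ CFset att E'

/-- if `ξ` composed with r-cf satisfies cf-Compatibility, then `ξ`
satisfies Dominating set on all r-cf-realisable preorders. -/
theorem stmt11 {α : Type*} [Fintype α] (ξ : SRF α)
    (hC : ∀ (att : α → α → Prop) (a b : α),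
      (∃ E : Finset α, ConflictFree att E ∧ a ∈ E) →
      (∀ E : Finset α, ConflictFree att E → b ∉ E) →
      sp (ξ (rcf att)) a b)
    (r : Finset α → Finset α → Prop)
    (hreal : ∃ att : α → α → Prop, r = rcf att)
    (x y : α)
    (hdom : ∃ X : Finset α, x ∈ X ∧ ∀ Y : Finset α, y ∈ Y → strictPart r X Y) :
    sp (ξ r) x y := by
  obtain ⟨att, rfl⟩ := hreal
  obtain ⟨X, hxX, hX⟩ := hdom
  obtain ⟨h1, h2⟩ := hX {y} (Finset.mem_singleton_self y)
  have hyy : att y y := by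
    by_contra h
    apply h2
    intro p hp
    obtain ⟨hp1, hp2, hp3⟩ := hp
    simp only [Finset.mem_singleton] at hp1 hp2
    exact absurd hp3 (by rw [hp1, hp2]; exact h)
  have hxx : ¬ att x x := by
    intro h
    have hmem : ((x, x) : α × α) ∈ CFset att X := ⟨hxX, hxX, h⟩
    have := h1 hmem
    obtain ⟨hp1, hp2, _⟩ := this
    simp only [Finset.mem_singleton] at hp1
    subst hp1
    apply h2
    intro p hp
    obtain ⟨hq1, hq2, hq3⟩ := hp
    simp only [Finset.mem_singleton] at hq1 hq2
    exact ⟨hq1 ▸ hxX, hq2 ▸ hxX, hq3⟩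
  apply hC att x y
  · exact ⟨{x}, fun a ha b hb hab => by
      simp only [Finset.mem_singleton] at ha hb
      rw [ha, hb] at hab; exact hxx hab, Finset.mem_singleton_self x⟩
  · intro E hE hyE
    exact hE y hyE y hyE hyy
end

section
/- If a social ranking function ξ satisfies Independence from the worst set and Pareto-efficiency, and τ is an extension-ranking semantics satisfying σ-generalisation (the maximal elements of ⊒^τ_F are exactly the σ-extensions) for a semantics σ with σ(F) ≠ ∅ and with all σ-extensions having rank 1 under τ, then the induced argument ranking ξ_τ satisfies σ-Compatibility: every credulously accepted argument is ranked strictly above every rejected argument. -/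
/-!
Compare `r` with the two-level ranking `twoLevel σ(F)`, in which the σ-extensions form the top
class and all other sets the bottom one. Every set containing `y` lies in the bottom class while
some set containing `x` is on top, so Pareto-efficiency ranks `x` strictly above `y`. The ranking
`r` has the same rank-one sets and puts all other sets at rank at least two, so independence from
the worst set carries the comparison over to `r`.
-/

def twoLevel {α : Type*} (S : Set (Finset α)) (X Y : Finset α) : Prop :=
  X ∈ S ∨ Y ∉ S

section TwoLevel

variable {α : Type*} {S : Set (Finset α)}

lemma strictPart_twoLevel {X Y : Finset α} : strictPart (twoLevel S) X Y ↔ X ∈ S ∧ Y ∉ S := by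
  simp only [strictPart, twoLevel]
  tauto

lemma chainAbove_twoLevel_iff (hS : S.Nonempty) {X : Finset α} {n : ℕ} :
    ChainAbove (twoLevel S) X n ↔ n = 0 ∨ n = 1 ∧ X ∉ S := by
  constructor
  · rintro ⟨l, rfl, hl⟩
    match l, hl with
    | [], _ => exact .inl rfl
    | [a], hl =>
      simp only [List.Chain', List.cons_append, List.nil_append, List.isChain_pair,
        strictPart_twoLevel] at hl
      exact .inr ⟨rfl, hl.2⟩
    | a :: b :: t, hl =>
      -- the middle element `b` of `a ⊐ b ⊐ c` would have to lie both outside and inside `S`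
      obtain ⟨c, rest, hc⟩ : ∃ c rest, t ++ [X] = c :: rest := List.exists_cons_of_ne_nil (by simp)
      simp only [List.Chain', List.cons_append, hc, List.isChain_cons_cons,
        strictPart_twoLevel] at hl
      exact absurd hl.2.1.1 hl.1.2
  · rintro (rfl | ⟨rfl, hX⟩)
    · exact ⟨[], rfl, List.isChain_singleton X⟩
    · obtain ⟨E, hE⟩ := hS
      exact ⟨[E], rfl, List.isChain_pair.2 (strictPart_twoLevel.2 ⟨hE, hX⟩)⟩

lemma rank_twoLevel_of_mem_s16 (hS : S.Nonempty) {X : Finset α} (hX : X ∈ S) :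
    rank (twoLevel S) X = 1 := by
  have hchains : {n | ChainAbove (twoLevel S) X n} = {0} := by
    ext n
    simp [chainAbove_twoLevel_iff hS, hX]
  simp [rank, hchains]

lemma rank_twoLevel_of_notMem_s16 (hS : S.Nonempty) {X : Finset α} (hX : X ∉ S) :
    rank (twoLevel S) X = 2 := by
  have hchains : {n | ChainAbove (twoLevel S) X n} = {0, 1} := by
    ext n
    simp [chainAbove_twoLevel_iff hS, hX]
  simp [rank, hchains]

lemma rank_twoLevel_le_two_s16 (hS : S.Nonempty) (X : Finset α) : rank (twoLevel S) X ≤ 2 := by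
  by_cases hX : X ∈ S
  · simp [rank_twoLevel_of_mem_s16 hS hX]
  · simp [rank_twoLevel_of_notMem_s16 hS hX]

lemma maxRank_twoLevel (hS : S.Nonempty) {Y : Finset α} (hY : Y ∉ S) :
    maxRank (twoLevel S) = 2 :=
  IsGreatest.csSup_eq ⟨⟨Y, rank_twoLevel_of_notMem_s16 hS hY⟩,
    by rintro _ ⟨X, rfl⟩; exact rank_twoLevel_le_two_s16 hS X⟩

end TwoLevel

lemma ParetoEfficient.sp_twoLevel {α : Type*} [DecidableEq α] {ξ : SRF α}
    (hP : ParetoEfficient ξ) {S : Set (Finset α)} {x y : α} {E : Finset α} (hE : E ∈ S)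
    (hxE : x ∈ E) (hy : ∀ E ∈ S, y ∉ E) : sp (ξ (twoLevel S)) x y := by
  have hS : S.Nonempty := ⟨E, hE⟩
  have hyZ (Z : Finset α) : rank (twoLevel S) (insert y Z) = 2 :=
    rank_twoLevel_of_notMem_s16 hS fun h => hy _ h (Finset.mem_insert_self y Z)
  refine hP _ x y (fun Z _ _ => ?_) ⟨E.erase x, Finset.notMem_erase x E,
    fun h => hy E hE (Finset.mem_of_mem_erase h), ?_⟩
  · rw [hyZ]
    exact rank_twoLevel_le_two_s16 hS _
  · rw [hyZ, Finset.insert_erase hxE, rank_twoLevel_of_mem_s16 hS hE]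
    omega

lemma IndepWorstSet.sp_of_sp_twoLevel {α : Type*} {ξ : SRF α} (hI : IndepWorstSet ξ)
    {r : Finset α → Finset α → Prop} {S : Set (Finset α)} (hS : S.Nonempty)
    (hgen : ∀ E, rank r E = 1 ↔ E ∈ S) {Y : Finset α} (hY : Y ∉ S) {x y : α}
    (hxy : sp (ξ (twoLevel S)) x y) : sp (ξ r) x y := by
  refine hI _ r (fun X hX => ?_) (fun X hX => ?_) x y hxy
  · have hXS : X ∈ S := by
      by_contra hXS
      rw [rank_twoLevel_of_notMem_s16 hS hXS, maxRank_twoLevel hS hY] at hX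
      exact hX.false
    rw [rank_twoLevel_of_mem_s16 hS hXS]
    exact (hgen X).2 hXS
  · have hXS : X ∉ S := by
      intro hXS
      rw [rank_twoLevel_of_mem_s16 hS hXS, maxRank_twoLevel hS hY] at hX
      omega
    have hr : rank r X ≠ 1 := (hgen X).not.2 hXS
    rw [maxRank_twoLevel hS hY]
    unfold rank at hr ⊢
    omega

theorem stmt16_general {α : Type*} [DecidableEq α] (ξ : SRF α)
    (hI : IndepWorstSet ξ) (hP : ParetoEfficient ξ)
    (r : Finset α → Finset α → Prop)
    (ext : Set (Finset α))
    (hgen : ∀ E : Finset α, rank r E = 1 ↔ E ∈ ext)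
    (x y : α) (hx : ∃ E ∈ ext, x ∈ E) (hy : ∀ E ∈ ext, y ∉ E) :
    sp (ξ r) x y := by
  obtain ⟨E, hE, hxE⟩ := hx
  have hyS : {y} ∉ ext := fun h => hy _ h (Finset.mem_singleton_self y)
  exact hI.sp_of_sp_twoLevel ⟨E, hE⟩ hgen hyS (hP.sp_twoLevel hE hxE hy)

/-- if `ξ` satisfies Independence from the worst set and
Pareto-efficiency and the extension ranking `r` satisfies σ-generalisation (the
rank-1 sets are exactly the σ-extensions), then the induced argument ranking
satisfies σ-Compatibility. -/
theorem stmt16 {α : Type*} [Fintype α] [DecidableEq α] (ξ : SRF α)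
    (hI : IndepWorstSet ξ) (hP : ParetoEfficient ξ)
    (r : Finset α → Finset α → Prop)
    (ext : Set (Finset α)) (hne : ext.Nonempty)
    (hgen : ∀ E : Finset α, rank r E = 1 ↔ E ∈ ext)
    (x y : α) (hx : ∃ E ∈ ext, x ∈ E) (hy : ∀ E ∈ ext, y ∉ E) :
    sp (ξ r) x y :=
  stmt16_general ξ hI hP r ext hgen x y hx hy
end
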